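/- arXiv:0707.3781 — 2 statements merged into one kernel-verified Lean document; each statement's English description precedes it below -/
import Mathlib

section
/- In Reiter default logic, two distinct extensions of the same default theory are incomparable under set inclusion is NOT required for arbitrary semantics; specifically, the default theory with empty background theory and defaults {(⊤, a, b), (⊤, ¬a, b)} has exactly one extension Cn({b}) in constrained semantics, but two distinct double extensions ⟨{a}, Cn({b})⟩ and ⟨{¬a}, Cn({b})⟩. -/
/-!
The justifications `a` and `¬a` of the two defaults exclude each other, so no globally successful
process applies both, while each of them alone forms a globally successful process. Hence the
constrained processes are exactly `[d₁]` and `[d₂]`: they share the extension `Cn({b})` but have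
different justification sets.
-/

universe u

/-- Semantic propositional formulae over variables `V`. -/
def Form (V : Type u) : Type u := (V → Bool) → Prop

/-- Semantic entailment between formulae. -/
def Entails {V : Type u} (A C : Form V) : Prop := ∀ v, A v → C v

/-- Satisfaction of a set of formulae by an assignment. -/
def SetSat {V : Type u} (S : Set (Form V)) (v : V → Bool) : Prop := ∀ A ∈ S, A v

/-- Entailment from a set of formulae. -/
def SetEntails {V : Type u} (S : Set (Form V)) (C : Form V) : Prop :=
  ∀ v, SetSat S v → C v

/-- Consistency of a set of formulae. -/
def Consistent {V : Type u} (S : Set (Form V)) : Prop := ∃ v, SetSat S v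

/-- A formula does not depend on (does not contain) the variable `a`. -/
def IndepOf {V : Type u} [DecidableEq V] (A : Form V) (a : V) : Prop :=
  ∀ (v : V → Bool) (c : Bool), A (Function.update v a c) ↔ A v

/-- A formula contains only variables in `X`. -/
def VarsIn {V : Type u} [DecidableEq V] (γ : Form V) (X : Set V) : Prop :=
  ∀ a ∉ X, IndepOf γ a

/-- Var-equivalence with respect to a set of variables `X`. -/
def VarEquiv {V : Type u} [DecidableEq V] (X : Set V) (α β : Form V) : Prop :=
  ∀ γ : Form V, VarsIn γ X → (Entails α γ ↔ Entails β γ)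

/-- A default: precondition, justification, consequence. -/
structure Default (V : Type u) where
  prec : Form V
  just : Form V
  cons : Form V

/-- The set of consequences of the defaults in a sequence. -/
def consSet {V : Type u} (Pr : List (Default V)) : Set (Form V) :=
  {φ | ∃ d ∈ Pr, d.cons = φ}

/-- The set of justifications of the defaults in a sequence. -/
def justSet {V : Type u} (Pr : List (Default V)) : Set (Form V) :=
  {φ | ∃ d ∈ Pr, d.just = φ}

/-- A process of the default theory `⟨D, W⟩`: a sequence of distinct defaults
from `D` with consistent consequences, each precondition entailed by the
background theory together with the consequences of the earlier defaults. -/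
def IsProcess {V : Type u} (D : Set (Default V)) (W : Set (Form V))
    (Pr : List (Default V)) : Prop :=
  (∀ d ∈ Pr, d ∈ D) ∧ Pr.Nodup ∧ Consistent (W ∪ consSet Pr) ∧
    ∀ i : Fin Pr.length, SetEntails (W ∪ consSet (Pr.take i)) (Pr.get i).prec

/-- Global success of a sequence of defaults. -/
def GlobSucc {V : Type u} (W : Set (Form V)) (Pr : List (Default V)) : Prop :=
  Consistent (W ∪ consSet Pr ∪ justSet Pr)

/-- Local success of a sequence of defaults. -/
def LocSucc {V : Type u} (W : Set (Form V)) (Pr : List (Default V)) : Prop :=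
  ∀ d ∈ Pr, Consistent (W ∪ consSet Pr ∪ {d.just})

/-- A globally successful process. -/
def GlobSuccProcess {V : Type u} (D : Set (Default V)) (W : Set (Form V))
    (Pr : List (Default V)) : Prop :=
  IsProcess D W Pr ∧ GlobSucc W Pr

/-- A locally successful process. -/
def LocSuccProcess {V : Type u} (D : Set (Default V)) (W : Set (Form V))
    (Pr : List (Default V)) : Prop :=
  IsProcess D W Pr ∧ LocSucc W Pr

/-- A constrained process: maximal globally successful process. -/
def ConstrainedProcess {V : Type u} (D : Set (Default V)) (W : Set (Form V))
    (Pr : List (Default V)) : Prop :=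
  GlobSuccProcess D W Pr ∧
    ∀ d ∈ D, d ∉ Pr → ¬ GlobSuccProcess D W (Pr ++ [d])

/-- A rational process: globally successful process closed under global
applicability. -/
def RationalProcess {V : Type u} (D : Set (Default V)) (W : Set (Form V))
    (Pr : List (Default V)) : Prop :=
  GlobSuccProcess D W Pr ∧
    ∀ d ∈ D, d ∉ Pr →
      ¬ (SetEntails (W ∪ consSet Pr) d.prec ∧
          Consistent (W ∪ consSet Pr ∪ justSet Pr ∪ {d.just}))

/-- A justified process: maximal locally successful process. -/
def JustifiedProcess {V : Type u} (D : Set (Default V)) (W : Set (Form V))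
    (Pr : List (Default V)) : Prop :=
  LocSuccProcess D W Pr ∧
    ∀ d ∈ D, d ∉ Pr → ¬ LocSuccProcess D W (Pr ++ [d])

/-- A Reiter process: locally successful process closed under local
applicability. -/
def ReiterProcess {V : Type u} (D : Set (Default V)) (W : Set (Form V))
    (Pr : List (Default V)) : Prop :=
  LocSuccProcess D W Pr ∧
    ∀ d ∈ D, d ∉ Pr →
      ¬ (SetEntails (W ∪ consSet Pr) d.prec ∧
          Consistent (W ∪ consSet Pr ∪ {d.just}))

/-- Deductive closure. -/
def Cn {V : Type u} (S : Set (Form V)) : Set (Form V) := {φ | SetEntails S φ}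

/-- The extension generated by a process. -/
def ext {V : Type u} (W : Set (Form V)) (Pr : List (Default V)) : Set (Form V) :=
  Cn (W ∪ consSet Pr)

/-- The seminormal translation: conjoin each default's consequence to its
justification. -/
def TCR {V : Type u} (d : Default V) : Default V :=
  ⟨d.prec, fun v => d.just v ∧ d.cons v, d.cons⟩

section Processes

variable {V : Type u} {D : Set (Default V)} {W : Set (Form V)}

theorem Consistent.mono {S T : Set (Form V)} (hT : Consistent T) (hST : S ⊆ T) :
    Consistent S :=
  let ⟨v, hv⟩ := hT
  ⟨v, fun A hA => hv A (hST hA)⟩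

@[simp]
theorem consSet_nil : consSet ([] : List (Default V)) = ∅ := by
  simp [consSet]

@[simp]
theorem consSet_singleton (d : Default V) : consSet [d] = {d.cons} := by
  ext φ; simp [consSet]

@[simp]
theorem justSet_singleton (d : Default V) : justSet [d] = {d.just} := by
  ext φ; simp [justSet]

theorem ext_singleton (d : Default V) : ext W [d] = Cn (W ∪ {d.cons}) := by
  rw [ext, consSet_singleton]

theorem globSuccProcess_singleton {d : Default V} (hd : d ∈ D) (hprec : SetEntails W d.prec)
    (hcons : Consistent (W ∪ {d.cons} ∪ {d.just})) : GlobSuccProcess D W [d] := by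
  refine ⟨⟨by simpa using hd, List.nodup_singleton d, ?_, ?_⟩, by simpa [GlobSucc] using hcons⟩
  · simpa using hcons.mono Set.subset_union_left
  · intro i
    fin_cases i
    simpa using hprec

theorem not_globSucc_of_just_conflict {d e : Default V} (hconf : ∀ v, d.just v → ¬ e.just v)
    {Pr : List (Default V)} (hd : d ∈ Pr) (he : e ∈ Pr) : ¬ GlobSucc W Pr :=
  fun ⟨v, hv⟩ => hconf v (hv _ (Or.inr ⟨d, hd, rfl⟩)) (hv _ (Or.inr ⟨e, he, rfl⟩))

theorem constrainedProcess_singleton_of_pair {d₁ d₂ : Default V}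
    (h₁ : GlobSuccProcess {d₁, d₂} W [d₁]) (hconf : ∀ v, d₁.just v → ¬ d₂.just v) :
    ConstrainedProcess {d₁, d₂} W [d₁] := by
  refine ⟨h₁, ?_⟩
  rintro d (rfl | rfl) hd ⟨-, hgs⟩
  · exact hd (List.mem_singleton_self d)
  · exact not_globSucc_of_just_conflict hconf (by simp) (by simp) hgs

theorem eq_singleton_of_constrainedProcess_pair {d₁ d₂ : Default V}
    (h₁ : GlobSuccProcess {d₁, d₂} W [d₁]) (hconf : ∀ v, d₁.just v → ¬ d₂.just v)
    {Pr : List (Default V)} (hPr : ConstrainedProcess {d₁, d₂} W Pr) :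
    Pr = [d₁] ∨ Pr = [d₂] := by
  obtain ⟨⟨⟨hmem, hnodup, -⟩, hgs⟩, hmax⟩ := hPr
  match Pr, hmem, hnodup, hmax with
  | [], _, _, hmax => exact absurd (by simpa using h₁) (hmax d₁ (by simp) (by simp))
  | [d], hmem, _, _ => simpa using hmem
  | d :: e :: rest, hmem, hnodup, _ =>
    have hde : d ≠ e := by simp_all
    have hd : d = d₁ ∨ d = d₂ := by simpa using hmem d (by simp)
    have he : e = d₁ ∨ e = d₂ := by simpa using hmem e (by simp)
    rcases hd with rfl | rfl <;> rcases he with rfl | rfl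
    all_goals first
      | exact absurd rfl hde
      | exact absurd hgs (not_globSucc_of_just_conflict hconf (by simp) (by simp))

theorem constrainedProcess_pair_iff {d₁ d₂ : Default V}
    (h₁ : GlobSuccProcess {d₁, d₂} W [d₁]) (h₂ : GlobSuccProcess {d₁, d₂} W [d₂])
    (hconf : ∀ v, d₁.just v → ¬ d₂.just v) (Pr : List (Default V)) :
    ConstrainedProcess {d₁, d₂} W Pr ↔ Pr = [d₁] ∨ Pr = [d₂] := by
  have hconf' : ∀ v, d₂.just v → ¬ d₁.just v := fun v h₂ h₁ => hconf v h₁ h₂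
  rw [Set.pair_comm] at h₂
  refine ⟨eq_singleton_of_constrainedProcess_pair h₁ hconf, ?_⟩
  rintro (rfl | rfl)
  · exact constrainedProcess_singleton_of_pair h₁ hconf
  · rw [Set.pair_comm]
    exact constrainedProcess_singleton_of_pair h₂ hconf'

end Processes

/-- The theory `⟨{(⊤, a, b), (⊤, ¬a, b)}, ∅⟩` has exactly one constrained
extension `Cn({b})`, but exactly two distinct double extensions
`⟨{a}, Cn({b})⟩` and `⟨{¬a}, Cn({b})⟩`. -/
theorem stmt13 :
    let aF : Form (Fin 2) := fun v => v 0 = true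
    let naF : Form (Fin 2) := fun v => v 0 = false
    let bF : Form (Fin 2) := fun v => v 1 = true
    let d1 : Default (Fin 2) := ⟨fun _ => True, aF, bF⟩
    let d2 : Default (Fin 2) := ⟨fun _ => True, naF, bF⟩
    let D : Set (Default (Fin 2)) := {d1, d2}
    let W : Set (Form (Fin 2)) := ∅
    ({E | ∃ Pr, ConstrainedProcess D W Pr ∧ E = ext W Pr} = {Cn ({bF} : Set (Form (Fin 2)))}) ∧
    ({p | ∃ Pr, ConstrainedProcess D W Pr ∧ p = (justSet Pr, ext W Pr)} =
      {(({aF} : Set (Form (Fin 2))), Cn ({bF} : Set (Form (Fin 2)))),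
       (({naF} : Set (Form (Fin 2))), Cn ({bF} : Set (Form (Fin 2))))}) ∧
    (({aF} : Set (Form (Fin 2))), Cn ({bF} : Set (Form (Fin 2)))) ≠
      (({naF} : Set (Form (Fin 2))), Cn ({bF} : Set (Form (Fin 2)))) := by
  intro aF naF bF d1 d2 D W
  have hsat : ∀ c : Bool, SetSat (W ∪ {bF} ∪ {fun v => v 0 = c}) ![c, true] := by
    rintro c A ((hA | rfl) | rfl)
    exacts [hA.elim, rfl, rfl]
  have hcp := constrainedProcess_pair_iff (d₁ := d1) (d₂ := d2) (W := W)
    (globSuccProcess_singleton (by simp) (fun _ _ => trivial) ⟨_, hsat true⟩)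
    (globSuccProcess_singleton (by simp) (fun _ _ => trivial) ⟨_, hsat false⟩)
    (fun v h₁ h₂ => by simp_all [d1, d2, aF, naF])
  have hext : ∀ φ, ext W [⟨fun _ => True, φ, bF⟩] = Cn {bF} := by
    simp [ext_singleton, W]
  have haF : aF ≠ naF := fun h => by simpa [aF, naF] using congrFun h fun _ => true
  refine ⟨?_, ?_, by simpa using haF⟩
  · ext E
    simp [D, hcp, hext, d1, d2]
  · ext p
    simp [D, hcp, hext, d1, d2]
end

section
/- There is a bijection between the justified processes of ⟨D,W⟩ and the constrained processes of T_JC(⟨D,W⟩) such that the extensions generated by associated processes are var-equivalent with respect to the variables of ⟨D,W⟩. -/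
universe u

variable {X : Type u} {m : ℕ}

/-- The extended alphabet: the original variables `X` together with `m`
disjoint fresh copies `X₁, …, X_m` of `X`. -/
abbrev VJC (X : Type u) (m : ℕ) : Type u := X ⊕ (X × Fin m)

/-- A formula over `X` read over the extended alphabet (no renaming). -/
def lift (φ : Form X) : Form (VJC X m) := fun v => φ (fun x => v (Sum.inl x))

/-- The renaming `φ[X/X_i]` of a formula to the `i`-th copy of the alphabet. -/
def ren (i : Fin m) (φ : Form X) : Form (VJC X m) :=
  fun v => φ (fun x => v (Sum.inr (x, i)))

/-- The translation `T_JC` of the `i`-th default: the justification is moved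
to the private alphabet `X_i` and the consequence is drawn on all alphabets. -/
def TJC (D : Fin m → Default X) (i : Fin m) : Default (VJC X m) :=
  ⟨lift (D i).prec,
   ren i (D i).just,
   fun v => lift (D i).cons v ∧ ∀ j : Fin m, ren j (D i).cons v⟩

/-- The translated background theory `W ∧ W[X/X₁] ∧ ⋯ ∧ W[X/X_m]`. -/
def WJC (W : Form X) : Form (VJC X m) :=
  fun v => lift W v ∧ ∀ j : Fin m, ren j W v

section Processes

variable {V : Type u}

/-- A process of a default theory with defaults indexed by `ι` and background
formula `W`: a sequence of distinct defaults with consistent consequences, each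
precondition entailed by `W` plus the earlier consequences. -/
def IsProcessIdx {ι : Type*} (Ds : ι → Default V) (W : Form V)
    (Pr : List ι) : Prop :=
  Pr.Nodup ∧ (∃ v, W v ∧ ∀ i ∈ Pr, (Ds i).cons v) ∧
    ∀ k : Fin Pr.length, ∀ v,
      (W v ∧ ∀ j ∈ Pr.take k, (Ds j).cons v) → (Ds (Pr.get k)).prec v

/-- Local success: each justification is individually consistent with the
background theory and all consequences. -/
def LocSuccIdx {ι : Type*} (Ds : ι → Default V) (W : Form V)
    (Pr : List ι) : Prop :=
  ∀ i ∈ Pr, ∃ v, (W v ∧ ∀ j ∈ Pr, (Ds j).cons v) ∧ (Ds i).just v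

/-- Global success: all justifications together are consistent with the
background theory and all consequences. -/
def GlobSuccIdx {ι : Type*} (Ds : ι → Default V) (W : Form V)
    (Pr : List ι) : Prop :=
  ∃ v, (W v ∧ ∀ j ∈ Pr, (Ds j).cons v) ∧ ∀ i ∈ Pr, (Ds i).just v

/-- A justified process: maximal locally successful process. -/
def JustifiedIdx {ι : Type*} (Ds : ι → Default V) (W : Form V)
    (Pr : List ι) : Prop :=
  (IsProcessIdx Ds W Pr ∧ LocSuccIdx Ds W Pr) ∧
    ∀ i, i ∉ Pr →
      ¬ (IsProcessIdx Ds W (Pr ++ [i]) ∧ LocSuccIdx Ds W (Pr ++ [i]))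

/-- A constrained process: maximal globally successful process. -/
def ConstrainedIdx {ι : Type*} (Ds : ι → Default V) (W : Form V)
    (Pr : List ι) : Prop :=
  (IsProcessIdx Ds W Pr ∧ GlobSuccIdx Ds W Pr) ∧
    ∀ i, i ∉ Pr →
      ¬ (IsProcessIdx Ds W (Pr ++ [i]) ∧ GlobSuccIdx Ds W (Pr ++ [i]))

end Processes

/-!
An assignment to the extended alphabet is a tuple of assignments to `X`: one on `X` itself and
one on each copy `X_i`. Since every consequence is drawn on all copies, each component is a model
of the background theory and of all consequences; since the `i`-th justification lives on its own
copy `X_i`, the translated justifications are jointly satisfiable exactly when the original ones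
are individually satisfiable. So local success of a process becomes global success of the same
process after the translation. Restricting to `X`, resp. copying an assignment to every alphabet,
shows that the translation is conservative over `X`; this transfers the process conditions and
gives the equivalence of the extensions.
-/

/-- The theory `W ∪ cons(L)`, as a single formula. -/
def premises {ι : Type*} {V : Type u} (Ds : ι → Default V) (W : Form V) (L : List ι) :
    Form V :=
  fun v => W v ∧ ∀ i ∈ L, (Ds i).cons v

namespace TJC

def diag (v : X → Bool) : VJC X m → Bool := Sum.elim v fun p => v p.1

theorem premises_diag (D : Fin m → Default X) (W : Form X) (L : List (Fin m)) (v : X → Bool) :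
    premises (TJC D) (WJC W) L (diag v) ↔ premises D W L v :=
  ⟨fun ⟨⟨hW, _⟩, hc⟩ => ⟨hW, fun i hi => (hc i hi).1⟩,
   fun ⟨hW, hc⟩ => ⟨⟨hW, fun _ => hW⟩, fun i hi => ⟨hc i hi, fun _ => hc i hi⟩⟩⟩

theorem premises_comp_inl {D : Fin m → Default X} {W : Form X} {L : List (Fin m)}
    {w : VJC X m → Bool} (h : premises (TJC D) (WJC W) L w) :
    premises D W L (w ∘ Sum.inl) :=
  ⟨h.1.1, fun i hi => (h.2 i hi).1⟩

theorem premises_comp_inr {D : Fin m → Default X} {W : Form X} {L : List (Fin m)}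
    {w : VJC X m → Bool} (h : premises (TJC D) (WJC W) L w) (j : Fin m) :
    premises D W L fun x => w (Sum.inr (x, j)) :=
  ⟨h.1.2 j, fun i hi => (h.2 i hi).2 j⟩

theorem entails_lift_iff (D : Fin m → Default X) (W : Form X) (L : List (Fin m)) (γ : Form X) :
    (∀ w, premises (TJC D) (WJC W) L w → lift γ w) ↔ ∀ v, premises D W L v → γ v :=
  ⟨fun h v hv => h (diag v) ((premises_diag D W L v).2 hv),
   fun h _ hw => h _ (premises_comp_inl hw)⟩

theorem exists_premises_iff (D : Fin m → Default X) (W : Form X) (L : List (Fin m)) :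
    (∃ w, premises (TJC D) (WJC W) L w) ↔ ∃ v, premises D W L v :=
  ⟨fun ⟨_, hw⟩ => ⟨_, premises_comp_inl hw⟩,
   fun ⟨v, hv⟩ => ⟨diag v, (premises_diag D W L v).2 hv⟩⟩

theorem isProcessIdx_iff (D : Fin m → Default X) (W : Form X) (Pr : List (Fin m)) :
    IsProcessIdx (TJC D) (WJC W) Pr ↔ IsProcessIdx D W Pr :=
  and_congr_right fun _ =>
    and_congr (exists_premises_iff D W Pr)
      (forall_congr' fun k => entails_lift_iff D W (Pr.take k) (D (Pr.get k)).prec)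

theorem globSuccIdx_iff (D : Fin m → Default X) (W : Form X) (Pr : List (Fin m)) :
    GlobSuccIdx (TJC D) (WJC W) Pr ↔ (∃ v, premises D W Pr v) ∧ LocSuccIdx D W Pr := by
  constructor
  · rintro ⟨w, hw, hjust⟩
    exact ⟨⟨_, premises_comp_inl hw⟩, fun i hi => ⟨_, premises_comp_inr hw i, hjust i hi⟩⟩
  · rintro ⟨⟨v, hv⟩, hloc⟩
    have hcopy : ∀ j : Fin m, ∃ u, premises D W Pr u ∧ (j ∈ Pr → (D j).just u) := fun j =>
      if hj : j ∈ Pr then (hloc j hj).imp fun _ hu => ⟨hu.1, fun _ => hu.2⟩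
      else ⟨v, hv, fun h => absurd h hj⟩
    choose u hu hjust using hcopy
    -- `v` on `X`, and on the copy `X_j` a witness for the `j`-th justification
    exact ⟨Sum.elim v fun p => u p.2 p.1,
      ⟨⟨hv.1, fun j => (hu j).1⟩, fun i hi => ⟨hv.2 i hi, fun j => (hu j).2 i hi⟩⟩, hjust⟩

theorem constrainedIdx_iff_justifiedIdx (D : Fin m → Default X) (W : Form X)
    (Pr : List (Fin m)) : ConstrainedIdx (TJC D) (WJC W) Pr ↔ JustifiedIdx D W Pr := by
  have successful_iff : ∀ L : List (Fin m),
      (IsProcessIdx (TJC D) (WJC W) L ∧ GlobSuccIdx (TJC D) (WJC W) L) ↔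
        (IsProcessIdx D W L ∧ LocSuccIdx D W L) := fun L => by
    rw [isProcessIdx_iff, globSuccIdx_iff]
    exact ⟨fun ⟨hp, _, hl⟩ => ⟨hp, hl⟩, fun ⟨hp, hl⟩ => ⟨hp, hp.2.1, hl⟩⟩
  simp only [ConstrainedIdx, JustifiedIdx, successful_iff]

end TJC

theorem stmt17_general (D : Fin m → Default X) (W : Form X) :
    ∃ e : {Pr : List (Fin m) // JustifiedIdx D W Pr} ≃
          {Pr : List (Fin m) // ConstrainedIdx (TJC D) (WJC W) Pr},
      ∀ p : {Pr : List (Fin m) // JustifiedIdx D W Pr}, ∀ γ : Form X,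
        (∀ v, (W v ∧ ∀ i ∈ p.val, (D i).cons v) → γ v) ↔
        (∀ v, (WJC W v ∧ ∀ i ∈ (e p).val, (TJC D i).cons v) → lift γ v) :=
  ⟨Equiv.subtypeEquivRight fun Pr => (TJC.constrainedIdx_iff_justifiedIdx D W Pr).symm,
   fun p γ => (TJC.entails_lift_iff D W p.val γ).symm⟩

/-- There is a bijection between the justified processes of `⟨D, W⟩` and the
constrained processes of `T_JC(⟨D, W⟩)` such that the extensions generated by
associated processes are var-equivalent with respect to the variables of
`⟨D, W⟩`. -/
theorem stmt17 [DecidableEq X] (D : Fin m → Default X) (W : Form X)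
    (hW : ∃ v, W v) :
    ∃ e : {Pr : List (Fin m) // JustifiedIdx D W Pr} ≃
          {Pr : List (Fin m) // ConstrainedIdx (TJC D) (WJC W) Pr},
      ∀ p : {Pr : List (Fin m) // JustifiedIdx D W Pr}, ∀ γ : Form X,
        (∀ v, (W v ∧ ∀ i ∈ p.val, (D i).cons v) → γ v) ↔
        (∀ v, (WJC W v ∧ ∀ i ∈ (e p).val, (TJC D i).cons v) → lift γ v) :=
  stmt17_general D W
end
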